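/- Suppose d(x,y) ≤ d_max for all x, y. Then for every integer M ≥ 2 and every u ∈ (0,1], there exists a nonempty code C ⊆ 𝒴 with |C| ≤ M such that E_{X ~ P_X}[ min_{y ∈ C} d(X,y) ] ≤ D̃(u,Q_Y) + d_max · (1−u)^{M−1} ((M−1)u + 1). -/

import Mathlib

/-!
Random coding with `M` codewords drawn i.i.d. from `Q`. Fix `x` and accept a codeword `y` with
probability `σ(y) = P(p_c(x,y,U) ≤ u)`; the distortion of the code is at most that of the first
accepted codeword, or `d_max` if none is accepted. By the probability integral transform
`p_c(x,Y,U)` is uniform, so `∑ Q σ ≥ u` and no codeword is accepted with probability at most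
`(1-u)^M`. Conditioning on the first codeword gives `E ≤ α + (1-u) E'`, whence the expected
distortion is at most `u⁻¹ α + d_max (1-u)^M` with `α = ∑ Q d σ`; averaging over `x` turns
`u⁻¹ α` into `D̃(u,Q)`, and some code does no worse than the average.
-/

open MeasureTheory

/-- The pairwise correct probability `p_c(x,y,u)` with respect to the pmf `Q` on `Y`:
`p_c(x,y,u) = Q{y' : d(x,y') < d(x,y)} + u * Q{y' : d(x,y') = d(x,y)}`. -/
noncomputable def pc {X Y : Type*} [Fintype Y] (Q : Y → ℝ) (d : X → Y → ℝ)
    (x : X) (y : Y) (u : ℝ) : ℝ :=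
  (∑ y' : Y, if d x y' < d x y then Q y' else 0)
    + u * (∑ y' : Y, if d x y' = d x y then Q y' else 0)

/-- The functional `D̃(w,Q) = w⁻¹ ⬝ E_{P ⊗ Q ⊗ Unif[0,1]}[ d(X,Y) ⬝ 1{p_c(X,Y,U) ≤ w} ]`. -/
noncomputable def Dtilde {X Y : Type*} [Fintype X] [Fintype Y]
    (P : X → ℝ) (Q : Y → ℝ) (d : X → Y → ℝ) (w : ℝ) : ℝ :=
  w⁻¹ * ∑ x : X, ∑ y : Y, P x * Q y * d x y *
    (∫ u in Set.Icc (0:ℝ) 1, if pc Q d x y u ≤ w then (1:ℝ) else 0)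

open Finset

noncomputable section

/-- `P(f U ≤ w)` for `U` uniform on `[0,1]`. -/
def unifProbLe (f : ℝ → ℝ) (w : ℝ) : ℝ :=
  ∫ v in Set.Icc (0:ℝ) 1, if f v ≤ w then 1 else 0

section UnifProbLe

variable {f : ℝ → ℝ} {w : ℝ}

lemma unifProbLe_nonneg : 0 ≤ unifProbLe f w :=
  setIntegral_nonneg measurableSet_Icc fun v _ => by split_ifs <;> norm_num

lemma unifProbLe_le_one : unifProbLe f w ≤ 1 := by
  calc unifProbLe f w ≤ ∫ _ in Set.Icc (0:ℝ) 1, (1:ℝ) :=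
        integral_mono_of_nonneg (ae_of_all _ fun v => by dsimp only; split_ifs <;> norm_num)
          (integrable_const 1) (ae_of_all _ fun v => by dsimp only; split_ifs <;> norm_num)
    _ = 1 := by simp

lemma Monotone.le_unifProbLe (hf : Monotone f) {t : ℝ} (ht0 : 0 ≤ t) (ht1 : t ≤ 1)
    (h : f t ≤ w) : t ≤ unifProbLe f w := by
  have hint : IntegrableOn (fun v => if f v ≤ w then (1:ℝ) else 0) (Set.Icc 0 1) := by
    have hs : MeasurableSet {v | f v ≤ w} := measurableSet_le hf.measurable measurable_const
    refine Integrable.of_bound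
      (Measurable.ite hs measurable_const measurable_const).aestronglyMeasurable 1
      (ae_of_all _ fun v => ?_)
    split_ifs <;> norm_num
  calc t = ∫ v in Set.Icc 0 t, if f v ≤ w then (1:ℝ) else 0 := by
        rw [setIntegral_congr_fun measurableSet_Icc fun v hv => if_pos ((hf hv.2).trans h)]
        simp [ht0]
    _ ≤ unifProbLe f w :=
        setIntegral_mono_set hint (ae_of_all _ fun v => by dsimp only; split_ifs <;> norm_num)
          (Set.Icc_subset_Icc_right ht1).eventuallyLE

end UnifProbLe

section PairwiseCorrect

variable {X Y : Type*} [Fintype Y] {Q : Y → ℝ}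

lemma pc_monotone (hQ0 : ∀ y, 0 ≤ Q y) (d : X → Y → ℝ) (x : X) (y : Y) :
    Monotone (pc Q d x y) := fun v w hvw => by
  have : 0 ≤ ∑ y', if d x y' = d x y then Q y' else 0 :=
    sum_nonneg fun y' _ => by split_ifs <;> simp [hQ0]
  unfold pc
  gcongr

lemma pc_congr {d : X → Y → ℝ} {x : X} {y y' : Y} (h : d x y = d x y') :
    pc Q d x y = pc Q d x y' := by
  ext v
  simp only [pc, h]

/-- The probability integral transform: for `Y ~ Q` and `U` uniform, `p_c(x, Y, U)` is uniform
on `[0,1]`. -/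
theorem le_sum_mul_unifProbLe_pc (hQ0 : ∀ y, 0 ≤ Q y) (hQ1 : ∑ y, Q y = 1)
    (d : X → Y → ℝ) (x : X) {u : ℝ} (hu : u ≤ 1) :
    u ≤ ∑ y, Q y * unifProbLe (pc Q d x y) u := by
  classical
  have accept_all : ∀ y, pc Q d x y 1 ≤ u → Q y ≤ Q y * unifProbLe (pc Q d x y) u := fun y hy =>
    le_mul_of_one_le_right (hQ0 y) ((pc_monotone hQ0 d x y).le_unifProbLe zero_le_one le_rfl hy)
  by_cases hall : ∀ y, pc Q d x y 1 ≤ u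
  · calc u ≤ ∑ y, Q y := hQ1 ▸ hu
      _ ≤ ∑ y, Q y * unifProbLe (pc Q d x y) u := sum_le_sum fun y _ => accept_all y (hall y)
  push Not at hall
  obtain ⟨y₀, hy₀, hmin⟩ := exists_min_image (univ.filter fun y => u < pc Q d x y 1) (d x)
    (by simpa [Finset.Nonempty] using hall)
  -- Levels of `d x` below `d x y₀` are accepted outright; at level `d x y₀` a fraction
  -- `(u - a) / b` of `U` is accepted.
  set σ₀ := unifProbLe (pc Q d x y₀) u
  set a := ∑ y, if d x y < d x y₀ then Q y else 0
  set b := ∑ y, if d x y = d x y₀ then Q y else 0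
  have hb0 : 0 ≤ b := sum_nonneg fun y _ => by split_ifs <;> simp [hQ0]
  have hpc : ∀ v, pc Q d x y₀ v = a + v * b := fun v => rfl
  have hσ₀ : u - a ≤ b * σ₀ := by
    rcases le_or_gt u a with hua | hau
    · exact (sub_nonpos.2 hua).trans (mul_nonneg hb0 unifProbLe_nonneg)
    · have hub : u < a + b := by simpa [hpc] using (mem_filter.1 hy₀).2
      have hb : 0 < b := by linarith
      have ht : (u - a) / b ≤ σ₀ :=
        (pc_monotone hQ0 d x y₀).le_unifProbLe (div_nonneg (by linarith) hb.le)
          ((div_le_one hb).2 (by linarith)) (by rw [hpc, div_mul_cancel₀ _ hb.ne', add_sub_cancel])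
      rwa [div_le_iff₀' hb] at ht
  calc u ≤ a + b * σ₀ := by linarith
    _ = ∑ y, ((if d x y < d x y₀ then Q y else 0) + (if d x y = d x y₀ then Q y else 0) * σ₀) := by
      rw [sum_add_distrib, sum_mul]
    _ ≤ ∑ y, Q y * unifProbLe (pc Q d x y) u := sum_le_sum fun y _ => ?_
  split_ifs with hlt heq heq
  · exact absurd heq hlt.ne
  · have hy : pc Q d x y 1 ≤ u := by
      by_contra h
      exact (hmin y (by simpa using not_le.1 h)).not_gt hlt
    simpa using accept_all y hy
  · rw [zero_add, pc_congr heq]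
  · simpa using mul_nonneg (hQ0 y) unifProbLe_nonneg

end PairwiseCorrect

def iidExpect {Y : Type*} [Fintype Y] (Q : Y → ℝ) {n : ℕ} (F : (Fin n → Y) → ℝ) : ℝ :=
  ∑ f, (∏ i, Q (f i)) * F f

namespace iidExpect

variable {Y : Type*} [Fintype Y] {Q : Y → ℝ} {n : ℕ}

lemma cons (F : (Fin (n + 1) → Y) → ℝ) :
    iidExpect Q F = ∑ y, Q y * iidExpect Q fun f => F (Fin.cons y f) := by
  rw [iidExpect, ← (Fin.consEquiv fun _ => Y).sum_comp, Fintype.sum_prod_type]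
  simp [iidExpect, Fin.prod_univ_succ, mul_sum, mul_assoc]
  rfl

lemma const (hQ1 : ∑ y, Q y = 1) (c : ℝ) : iidExpect Q (fun _ : Fin n → Y => c) = c := by
  rw [iidExpect, ← sum_mul, ← Fintype.sum_pow, hQ1, one_pow, one_mul]

lemma const_add_mul (hQ1 : ∑ y, Q y = 1) (a b : ℝ) (J : (Fin n → Y) → ℝ) :
    iidExpect Q (fun f => a + b * J f) = a + b * iidExpect Q J := by
  calc iidExpect Q (fun f => a + b * J f)
      = a * iidExpect Q (fun _ => 1) + b * iidExpect Q J := by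
        simp only [iidExpect, mul_sum]
        rw [← sum_add_distrib]
        exact sum_congr rfl fun f _ => by ring
    _ = a + b * iidExpect Q J := by rw [const hQ1, mul_one]

lemma mono (hQ0 : ∀ y, 0 ≤ Q y) {F G : (Fin n → Y) → ℝ} (h : ∀ f, F f ≤ G f) :
    iidExpect Q F ≤ iidExpect Q G :=
  sum_le_sum fun f _ => mul_le_mul_of_nonneg_left (h f) (prod_nonneg fun i _ => hQ0 (f i))

lemma sum_mul {X : Type*} [Fintype X] (P : X → ℝ) (F : X → (Fin n → Y) → ℝ) :
    ∑ x, P x * iidExpect Q (F x) = iidExpect Q fun f => ∑ x, P x * F x f := by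
  simp only [iidExpect, mul_sum]
  rw [sum_comm]
  exact sum_congr rfl fun f _ => sum_congr rfl fun x _ => by ring

lemma exists_le [Nonempty Y] (hQ0 : ∀ y, 0 ≤ Q y) (hQ1 : ∑ y, Q y = 1)
    (F : (Fin n → Y) → ℝ) : ∃ f, F f ≤ iidExpect Q F := by
  obtain ⟨f, -, hf⟩ := exists_min_image univ F univ_nonempty
  exact ⟨f, const hQ1 (F f) ▸ mono hQ0 fun f' => hf f' (mem_univ f')⟩

end iidExpect

lemma inf'_comp_cons_le {Y : Type*} {n : ℕ} (g : Y → ℝ) (y : Y) (f : Fin (n + 1) → Y) :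
    univ.inf' univ_nonempty (g ∘ Fin.cons y f) ≤ min (g y) (univ.inf' univ_nonempty (g ∘ f)) :=
  le_min (inf'_le _ (mem_univ 0))
    (le_inf' _ _ fun i _ => inf'_le (g ∘ Fin.cons y f) (mem_univ i.succ))

section RandomCoding

variable {Y : Type*} [Fintype Y] {Q : Y → ℝ}

lemma min_le_convex_comb {a b t : ℝ} (ht0 : 0 ≤ t) (ht1 : t ≤ 1) :
    min a b ≤ t * a + (1 - t) * b := by
  nlinarith [mul_nonneg ht0 (sub_nonneg.2 (min_le_left a b)),
    mul_nonneg (sub_nonneg.2 ht1) (sub_nonneg.2 (min_le_right a b))]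

/-- Accept the first codeword `y` with probability `σ y`, otherwise fall back on the rest of the
codebook. -/
lemma iidExpect_le_of_cons_le (hQ0 : ∀ y, 0 ≤ Q y) (hQ1 : ∑ y, Q y = 1) {n : ℕ} {σ g : Y → ℝ}
    {F : (Fin (n + 1) → Y) → ℝ} {J : (Fin n → Y) → ℝ}
    (hF : ∀ y f, F (Fin.cons y f) ≤ σ y * g y + (1 - σ y) * J f) :
    iidExpect Q F ≤ ∑ y, Q y * g y * σ y + (∑ y, Q y * (1 - σ y)) * iidExpect Q J := by
  calc iidExpect Q F = ∑ y, Q y * iidExpect Q fun f => F (Fin.cons y f) := iidExpect.cons F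
    _ ≤ ∑ y, Q y * (σ y * g y + (1 - σ y) * iidExpect Q J) := by
      gcongr with y
      · exact hQ0 y
      · exact iidExpect.const_add_mul hQ1 _ _ J ▸ iidExpect.mono hQ0 (hF y)
    _ = _ := by
      rw [Finset.sum_mul, ← sum_add_distrib]
      exact sum_congr rfl fun y _ => by ring

theorem iidExpect_inf'_le [Nonempty Y] (hQ0 : ∀ y, 0 ≤ Q y) (hQ1 : ∑ y, Q y = 1)
    {g σ : Y → ℝ} {dmax u : ℝ} (hg0 : ∀ y, 0 ≤ g y) (hgmax : ∀ y, g y ≤ dmax)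
    (hσ0 : ∀ y, 0 ≤ σ y) (hσ1 : ∀ y, σ y ≤ 1) (hu : 0 < u) (hσu : u ≤ ∑ y, Q y * σ y)
    (n : ℕ) :
    iidExpect Q (fun f : Fin (n + 1) → Y => univ.inf' univ_nonempty (g ∘ f))
      ≤ u⁻¹ * ∑ y, Q y * g y * σ y + dmax * (1 - u) ^ (n + 1) := by
  set α := ∑ y, Q y * g y * σ y
  set β := ∑ y, Q y * (1 - σ y)
  have hα : 0 ≤ α := sum_nonneg fun y _ => mul_nonneg (mul_nonneg (hQ0 y) (hg0 y)) (hσ0 y)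
  have hβ0 : 0 ≤ β := sum_nonneg fun y _ => mul_nonneg (hQ0 y) (sub_nonneg.2 (hσ1 y))
  have hβu : β ≤ 1 - u := by
    have : β = 1 - ∑ y, Q y * σ y := by simp only [β, mul_sub, mul_one, sum_sub_distrib, hQ1]
    linarith
  have hdmax : 0 ≤ dmax := (hg0 (Classical.arbitrary Y)).trans (hgmax _)
  have step : ∀ {k : ℕ} {F : (Fin (k + 1) → Y) → ℝ} {J : (Fin k → Y) → ℝ},
      iidExpect Q J ≤ u⁻¹ * α + dmax * (1 - u) ^ k →
      (∀ y f, F (Fin.cons y f) ≤ min (g y) (J f)) →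
      iidExpect Q F ≤ u⁻¹ * α + dmax * (1 - u) ^ (k + 1) := by
    intro k F J hJ hF
    have hB : 0 ≤ u⁻¹ * α + dmax * (1 - u) ^ k := by
      have : 0 ≤ 1 - u := hβ0.trans hβu
      positivity
    calc iidExpect Q F ≤ α + β * iidExpect Q J :=
          iidExpect_le_of_cons_le hQ0 hQ1 fun y f =>
            (hF y f).trans (min_le_convex_comb (hσ0 y) (hσ1 y))
      _ ≤ α + (1 - u) * (u⁻¹ * α + dmax * (1 - u) ^ k) := add_le_add_right
          ((mul_le_mul_of_nonneg_left hJ hβ0).trans (mul_le_mul_of_nonneg_right hβu hB)) α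
      _ = u⁻¹ * α + dmax * (1 - u) ^ (k + 1) := by field_simp; ring
  induction n with
  | zero =>
    refine step (J := fun _ => dmax) ?_ fun y f => ?_
    · rw [iidExpect.const hQ1]
      simpa using mul_nonneg (inv_nonneg.2 hu.le) hα
    · rw [min_eq_left (hgmax y)]
      exact inf'_le _ (mem_univ 0)
  | succ n ih => exact step ih fun y f => inf'_comp_cons_le g y f

end RandomCoding

end

theorem achievability_M {X Y : Type*} [Fintype X] [Fintype Y] [Nonempty X] [Nonempty Y]
    (P : X → ℝ) (hP0 : ∀ x, 0 ≤ P x) (hP1 : ∑ x : X, P x = 1)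
    (Q : Y → ℝ) (hQ0 : ∀ y, 0 ≤ Q y) (hQ1 : ∑ y : Y, Q y = 1)
    (d : X → Y → ℝ) (hd : ∀ x y, 0 ≤ d x y)
    (dmax : ℝ) (hdmax : ∀ x y, d x y ≤ dmax)
    (M : ℕ) (hM : 2 ≤ M) (u : ℝ) (hu : u ∈ Set.Ioc (0:ℝ) 1) :
    ∃ C : Finset Y, ∃ hC : C.Nonempty, C.card ≤ M ∧
      (∑ x : X, P x * C.inf' hC fun y => d x y)
        ≤ Dtilde P Q d u + dmax * (1 - u) ^ (M - 1) * (((M:ℝ) - 1) * u + 1) := by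
  classical
  obtain ⟨hu0, hu1⟩ := hu
  obtain ⟨m, rfl⟩ : ∃ m, M = m + 1 := ⟨M - 1, by omega⟩
  have hx : ∀ x, iidExpect Q (fun c : Fin (m + 1) → Y => univ.inf' univ_nonempty (d x ∘ c))
      ≤ u⁻¹ * ∑ y, Q y * d x y * unifProbLe (pc Q d x y) u + dmax * (1 - u) ^ (m + 1) :=
    fun x => iidExpect_inf'_le hQ0 hQ1 (hd x) (hdmax x) (fun _ => unifProbLe_nonneg)
      (fun _ => unifProbLe_le_one) hu0 (le_sum_mul_unifProbLe_pc hQ0 hQ1 d x hu1) m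
  obtain ⟨f, hf⟩ := iidExpect.exists_le hQ0 hQ1
    fun c : Fin (m + 1) → Y => ∑ x, P x * univ.inf' univ_nonempty (d x ∘ c)
  have hdmax0 : 0 ≤ dmax := (hd (Classical.arbitrary X) (Classical.arbitrary Y)).trans (hdmax _ _)
  refine ⟨univ.image f, univ_nonempty.image f, card_image_le.trans (by simp), ?_⟩
  calc ∑ x, P x * (univ.image f).inf' (univ_nonempty.image f) (d x)
      = ∑ x, P x * univ.inf' univ_nonempty (d x ∘ f) := by simp only [inf'_image]
    _ ≤ ∑ x, P x * iidExpect Q (fun c : Fin (m + 1) → Y => univ.inf' univ_nonempty (d x ∘ c)) :=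
      hf.trans (iidExpect.sum_mul P _).ge
    _ ≤ ∑ x, P x * (u⁻¹ * ∑ y, Q y * d x y * unifProbLe (pc Q d x y) u
          + dmax * (1 - u) ^ (m + 1)) := by
      gcongr with x
      · exact hP0 x
      · exact hx x
    _ = Dtilde P Q d u + dmax * (1 - u) ^ (m + 1) := by
      rw [Dtilde, mul_sum]
      simp only [mul_add, sum_add_distrib, ← Finset.sum_mul, hP1, one_mul, mul_sum]
      congr 1
      exact sum_congr rfl fun x _ => sum_congr rfl fun y _ => by unfold unifProbLe; ring
    _ ≤ Dtilde P Q d u + dmax * (1 - u) ^ (m + 1 - 1) * ((((m + 1 : ℕ) : ℝ) - 1) * u + 1) := by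
      rw [Nat.add_sub_cancel, Nat.cast_add_one, add_sub_cancel_right, pow_succ, mul_assoc]
      gcongr
      nlinarith [(Nat.cast_nonneg m : (0:ℝ) ≤ m)]
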